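/- arXiv:1608.05550 — 2 statements merged into one kernel-verified Lean document; each statement's English description precedes it below -/
import Mathlib

section
/- If a query interval [s,t] contains two distinct MUPSs of S, then there is no SUPS for [s,t]. -/
/-!
A palindromic substring of a palindrome `P` reappears at its mirror image in `P`; if it is unique,
the two occurrences coincide, so it shares the centre of `P`. Hence two MUPSs inside a SUPS for
`[s,t]` have the same centre, and the longer one, `[x,y]`, contains the shorter inside its inner
part `S[x+1..y-1]`. That inner part occurs at least twice, so the shorter MUPS would occur at
least twice as well.
-/

/-- `sub S i j` is the substring `S[i..j]`, 1-indexed and inclusive. -/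
def sub (S : List Char) (i j : ℕ) : List Char := (S.drop (i-1)).take (j+1-i)

/-- A string is a palindrome if it equals its reversal. -/
def isPal (w : List Char) : Prop := w.reverse = w

/-- The set of (1-indexed) occurrence positions of `w` in `S`. -/
def occs (S w : List Char) : Finset ℕ :=
  (Finset.Icc 1 S.length).filter (fun p => sub S p (p + w.length - 1) = w)

/-- `w` occurs exactly once in `S`. -/
def uniqueIn (S w : List Char) : Prop := (occs S w).card = 1

/-- `[i,j]` is (the interval of) a unique palindromic substring of `S`. -/
def UPS (S : List Char) (i j : ℕ) : Prop :=
  1 ≤ i ∧ i ≤ j ∧ j ≤ S.length ∧ isPal (sub S i j) ∧ uniqueIn S (sub S i j)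

/-- `[i,j]` is a minimal unique palindromic substring of `S`. -/
def MUPS (S : List Char) (i j : ℕ) : Prop :=
  UPS S i j ∧ (j + 1 - i ≤ 2 ∨ 2 ≤ (occs S (sub S (i+1) (j-1))).card)

/-- `[i,j]` is a shortest unique palindromic substring of `S` for the query `[s,t]`. -/
def SUPS (S : List Char) (s t i j : ℕ) : Prop :=
  UPS S i j ∧ i ≤ s ∧ s ≤ t ∧ t ≤ j ∧
    ∀ i' j', UPS S i' j' → i' ≤ s → t ≤ j' → j - i ≤ j' - i'

lemma length_sub (S : List Char) {i j : ℕ} (hi : 1 ≤ i) (hj : j ≤ S.length) :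
    (sub S i j).length = j + 1 - i := by
  simp only [sub, List.length_take, List.length_drop]
  omega

lemma sub_eq_take_drop_sub (S : List Char) {a b x y : ℕ} (ha : 1 ≤ a) (hax : a ≤ x)
    (hyb : y ≤ b) : sub S x y = ((sub S a b).drop (x - a)).take (y + 1 - x) := by
  rw [sub, sub, List.drop_take, List.take_take, List.drop_drop]
  congr 2 <;> omega

lemma mem_occs {S w : List Char} {p : ℕ} :
    p ∈ occs S w ↔ 1 ≤ p ∧ p ≤ S.length ∧ (S.drop (p - 1)).take w.length = w := by
  rw [occs, Finset.mem_filter, Finset.mem_Icc, sub, and_assoc]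
  refine and_congr_right fun hp => and_congr_right fun _ => ?_
  rw [show p + w.length - 1 + 1 - p = w.length by omega]

lemma self_mem_occs_sub {S : List Char} {x y : ℕ} (hx : 1 ≤ x) (hxy : x ≤ y)
    (hy : y ≤ S.length) : x ∈ occs S (sub S x y) := by
  rw [mem_occs, length_sub S hx hy]
  exact ⟨hx, hxy.trans hy, rfl⟩

lemma add_length_le_of_mem_occs {S w : List Char} {p : ℕ} (h : p ∈ occs S w) :
    p - 1 + w.length ≤ S.length := by
  obtain ⟨-, hp, h⟩ := mem_occs.1 h
  have := congrArg List.length h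
  simp only [List.length_take, List.length_drop] at this
  omega

lemma add_sub_mem_occs_sub_of_le {S : List Char} {a b x y p : ℕ} (ha : 1 ≤ a) (hax : a ≤ x)
    (hxy : x ≤ y) (hyb : y ≤ b) (hb : b ≤ S.length) (hp : p ∈ occs S (sub S a b)) :
    p + (x - a) ∈ occs S (sub S x y) := by
  have hlen := add_length_le_of_mem_occs hp
  obtain ⟨hp1, -, hp⟩ := mem_occs.1 hp
  rw [length_sub S ha hb] at hp hlen
  rw [mem_occs, length_sub S (ha.trans hax) (hyb.trans hb), sub_eq_take_drop_sub S ha hax hyb,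
    ← hp, List.drop_take, List.take_take, List.drop_drop]
  refine ⟨by omega, by omega, ?_⟩
  congr 2 <;> omega

lemma card_occs_sub_le_of_le {S : List Char} {a b x y : ℕ} (ha : 1 ≤ a) (hax : a ≤ x)
    (hxy : x ≤ y) (hyb : y ≤ b) (hb : b ≤ S.length) :
    (occs S (sub S a b)).card ≤ (occs S (sub S x y)).card :=
  Finset.card_le_card_of_injOn (· + (x - a))
    (fun _ hp => add_sub_mem_occs_sub_of_le ha hax hxy hyb hb hp)
    (fun _ _ _ _ h => Nat.add_right_cancel h)

lemma List.reverse_take_drop_of_reverse_eq {α : Type*} {W : List α} (hW : W.reverse = W)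
    {k m : ℕ} (hkm : k + m ≤ W.length) :
    ((W.drop k).take m).reverse = (W.drop (W.length - k - m)).take m := by
  rw [List.reverse_take, List.reverse_drop, hW, List.length_drop, List.drop_take]
  congr 1
  omega

lemma mirror_mem_occs_sub {S : List Char} {i j x y : ℕ} (hi : 1 ≤ i) (hix : i ≤ x)
    (hxy : x ≤ y) (hyj : y ≤ j) (hj : j ≤ S.length) (hP : isPal (sub S i j))
    (hpal : isPal (sub S x y)) : i + j - y ∈ occs S (sub S x y) := by
  have hWlen := length_sub S hi hj
  have hmirror : sub S (i + j - y) (i + j - x) = sub S x y := by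
    rw [sub_eq_take_drop_sub S (b := j) (x := i + j - y) (y := i + j - x) hi (by omega)
        (by omega), ← hpal, sub_eq_take_drop_sub S hi hix hyj,
      List.reverse_take_drop_of_reverse_eq hP (by omega), hWlen, show i + j - x + 1 - (i + j - y) = y + 1 - x by omega,
      show j + 1 - i - (x - i) - (y + 1 - x) = i + j - y - i by omega]
  rw [mem_occs, length_sub S (hi.trans hix) (hyj.trans hj)]
  refine ⟨by omega, by omega, ?_⟩
  rw [← hmirror, sub]
  congr 1
  omega

lemma UPS.add_eq_of_le {S : List Char} {i j x y : ℕ} (hij : UPS S i j) (hxy : UPS S x y)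
    (hix : i ≤ x) (hyj : y ≤ j) : x + y = i + j := by
  obtain ⟨hi, -, hj, hP, -⟩ := hij
  obtain ⟨hx, hxy, -, hpal, hu⟩ := hxy
  have hm := mirror_mem_occs_sub hi hix hxy hyj hj hP hpal
  have hs := self_mem_occs_sub hx hxy (hyj.trans hj)
  obtain ⟨a, ha⟩ := Finset.card_eq_one.1 hu
  rw [ha, Finset.mem_singleton] at hm hs
  omega

lemma MUPS.not_lt_of_add_eq {S : List Char} {x1 y1 x2 y2 : ℕ} (h1 : MUPS S x1 y1)
    (h2 : MUPS S x2 y2) (hcentre : x1 + y1 = x2 + y2) : ¬ x2 < x1 := by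
  intro hlt
  obtain ⟨⟨-, hxy1, -, -, hu1⟩, -⟩ := h1
  obtain ⟨⟨hx2, -, hy2, -, -⟩, hshort | hrepeat⟩ := h2
  · omega
  · have := card_occs_sub_le_of_le (S := S) (a := x2 + 1) (b := y2 - 1)
      (by omega) (by omega) hxy1 (by omega) (by omega)
    rw [uniqueIn] at hu1
    omega

theorem stmt7 (S : List Char) (s t x1 y1 x2 y2 : ℕ)
    (h1 : MUPS S x1 y1) (h2 : MUPS S x2 y2) (hne : (x1, y1) ≠ (x2, y2))
    (hc1 : s ≤ x1 ∧ y1 ≤ t) (hc2 : s ≤ x2 ∧ y2 ≤ t) :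
    ¬ ∃ i j, SUPS S s t i j := by
  rintro ⟨i, j, hups, his, -, htj, -⟩
  have c1 := hups.add_eq_of_le h1.1 (by omega) (by omega)
  have c2 := hups.add_eq_of_le h2.1 (by omega) (by omega)
  have h12 := h1.not_lt_of_add_eq h2 (by omega)
  have h21 := h2.not_lt_of_add_eq h1 (by omega)
  exact hne (Prod.ext (by omega) (by omega))
end

section
/- If [x,y] is a MUPS of S with [x,y] contained in [s,t], and S[i..j] is any unique palindromic substring of S containing [s,t], then S[i..j] has the same center as [x,y], i.e., i+j = x+y. -/
/-!
A palindrome `S[i..j]` is its own mirror image, so reflecting a palindromic factor `S[x..y]` of it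
about its center gives an occurrence of the same word at `i + j - y`. If `S[x..y]` is unique, the
reflected occurrence is the original one, so `i + j - y = x`.
-/

lemma List.reverse_drop_take {α : Type*} (l : List α) (a k : ℕ) (h : a + k ≤ l.length) :
    (l.reverse.drop a).take k = ((l.drop (l.length - a - k)).take k).reverse := by
  rw [List.drop_reverse, List.take_reverse, List.length_take,
    Nat.min_eq_left (Nat.sub_le _ _), List.drop_take]
  congr 2
  omega

lemma sub_length (S : List Char) {x y : ℕ} (hx : 1 ≤ x) (hxy : x ≤ y) (hy : y ≤ S.length) :
    (sub S x y).length = y + 1 - x := by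
  unfold sub
  rw [List.length_take, List.length_drop]
  omega

lemma sub_eq_drop_take_sub (S : List Char) {i j x y : ℕ} (hi : 1 ≤ i) (hix : i ≤ x)
    (hxy : x ≤ y) (hyj : y ≤ j) :
    sub S x y = ((sub S i j).drop (x - i)).take (y + 1 - x) := by
  unfold sub
  rw [List.drop_take, List.drop_drop, List.take_take]
  congr 2 <;> omega

lemma sub_reflect_of_isPal (S : List Char) {i j x y : ℕ} (hi : 1 ≤ i) (hix : i ≤ x)
    (hxy : x ≤ y) (hyj : y ≤ j) (hj : j ≤ S.length) (hP : isPal (sub S i j))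
    (hw : isPal (sub S x y)) :
    sub S (i + j - y) (i + j - x) = sub S x y := by
  have hlen : (sub S i j).length = j + 1 - i := sub_length S hi (by omega) hj
  rw [sub_eq_drop_take_sub S hi (by omega) (by omega) (by omega : i + j - x ≤ j)]
  have hstart : i + j - y - i = j - y := by omega
  have hlen' : i + j - x + 1 - (i + j - y) = y + 1 - x := by omega
  rw [hstart, hlen', ← hP, List.reverse_drop_take _ _ _ (by omega), hlen]
  have hmirror : j + 1 - i - (j - y) - (y + 1 - x) = x - i := by omega
  rw [hmirror, ← sub_eq_drop_take_sub S hi hix hxy hyj, hw]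

lemma mem_occs_of_sub_eq (S : List Char) {x y p : ℕ} (hx : 1 ≤ x) (hxy : x ≤ y)
    (hy : y ≤ S.length) (hp : 1 ≤ p) (hpS : p + y - x ≤ S.length)
    (heq : sub S p (p + y - x) = sub S x y) : p ∈ occs S (sub S x y) := by
  simp only [occs, Finset.mem_filter, Finset.mem_Icc, sub_length S hx hxy hy]
  refine ⟨⟨hp, by omega⟩, ?_⟩
  rwa [show p + (y + 1 - x) - 1 = p + y - x by omega]

lemma eq_of_mem_occs_of_uniqueIn {S w : List Char} (hu : uniqueIn S w) {p q : ℕ}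
    (hp : p ∈ occs S w) (hq : q ∈ occs S w) : p = q :=
  Finset.card_le_one.mp hu.le p hp q hq

lemma UPS.add_eq_of_isPal_of_le {S : List Char} {x y i j : ℕ} (hu : UPS S x y)
    (hi : 1 ≤ i) (hix : i ≤ x) (hyj : y ≤ j) (hj : j ≤ S.length) (hP : isPal (sub S i j)) :
    i + j = x + y := by
  obtain ⟨hx, hxy, hy, hpal, huniq⟩ := hu
  have hself : x ∈ occs S (sub S x y) :=
    mem_occs_of_sub_eq S hx hxy hy hx (by omega) (by rw [Nat.add_sub_cancel_left])
  have hmirror : i + j - y ∈ occs S (sub S x y) :=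
    mem_occs_of_sub_eq S hx hxy hy (by omega) (by omega) (by
      rw [show i + j - y + y - x = i + j - x by omega]
      exact sub_reflect_of_isPal S hi hix hxy hyj hj hP hpal)
  have := eq_of_mem_occs_of_uniqueIn huniq hself hmirror
  omega

theorem stmt10 (S : List Char) (s t x y i j : ℕ)
    (hm : MUPS S x y) (hc : s ≤ x ∧ y ≤ t)
    (h : UPS S i j) (hcont : i ≤ s ∧ t ≤ j) :
    i + j = x + y := by
  obtain ⟨hi, -, hj, hP, -⟩ := h
  exact hm.1.add_eq_of_isPal_of_le hi (hcont.1.trans hc.1) (hc.2.trans hcont.2) hj hP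
end
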